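/- Let 0 < p < 1/2 and q = 1 − p. Let R_k(z) be the polynomials defined by R_{−1}(z) = 1, R_0(z) = 1 − q z, and R_k(z) = R_{k−1}(z) − p q z² R_{k−2}(z) for k ≥ 1. For all sufficiently large k, R_k has a zero z_k that is real, positive, greater than 1, and of smallest modulus among all complex zeros of R_k, and lim_{k→∞} (z_k − 1)·(q/p)^k = p (1 − 2p)² / q². -/

import Mathlib

/-!
For `4pq‖w‖² < 1` the characteristic roots `λ± = (1 ± √(1 - 4pqw²))/2` of the recurrence satisfy
`‖λ₋‖ < ‖λ₊‖`, and Binet's formula turns `RwrecC p w n = 0` into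
`(λ₊ - qw) λ₊ⁿ = (λ₋ - qw) λ₋ⁿ`. Since `(λ₊ - qw)(λ₋ - qw) = qw(w - 1)`, the leading coefficient
vanishes only at `w = 1`. Hence on a disc of radius `R > 1` with a small ball around `1` removed
there are no zeros once `n` is large, while near `1` the zeros are the fixed points of
`w ↦ 1 + g(w) (λ₋/λ₊)(w)ⁿ` with `g = (λ₋ - qw)²/(qw)`. By the Schwarz lemma this map is a
contraction, so there is at most one such zero, and it is real: the polynomial is `pⁿ > 0` at `1`
and negative slightly to the right of `1`. Finally `(λ₋/λ₊)(1) = p/q` and `z - 1 = O(θⁿ)` make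
`(q/p)ⁿ (λ₋/λ₊)(z)ⁿ → 1`, leaving the limit `g(1) p/q = p(1-2p)²/q²`.
-/

open Filter

/-- Index-shifted denominator polynomials of the weak scenario, evaluated at a
complex argument: `RwrecC p z (k+1)` is `R_k(z)`, with `R_{-1}(z) = 1`,
`R_0(z) = 1 - (1-p) z`, and `R_k(z) = R_{k-1}(z) - p (1-p) z² R_{k-2}(z)` for `k ≥ 1`. -/
noncomputable def RwrecC (p : ℝ) (z : ℂ) : ℕ → ℂ
  | 0 => 1
  | 1 => 1 - (1 - (p : ℂ)) * z
  | (k + 2) => RwrecC p z (k + 1) - (p : ℂ) * (1 - (p : ℂ)) * z ^ 2 * RwrecC p z k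

open Metric Set Topology

theorem sub_mul_eq_binet {R : Type*} [CommRing R] {u : ℕ → R} {α β : R}
    (hu : ∀ n, u (n + 2) = (α + β) * u (n + 1) - α * β * u n) (n : ℕ) :
    (α - β) * u n = (u 1 - β * u 0) * α ^ n - (u 1 - α * u 0) * β ^ n := by
  induction n using Nat.twoStepInduction with
  | zero => ring
  | one => ring
  | more n ih₀ ih₁ => rw [hu]; linear_combination (α + β) * ih₁ - α * β * ih₀

theorem IsCompact.exists_pos_le_norm {X E : Type*} [TopologicalSpace X] [NormedAddCommGroup E]
    {K : Set X} {f : X → E} (hK : IsCompact K) (hf : ContinuousOn f K)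
    (h : ∀ x ∈ K, f x ≠ 0) : ∃ m > 0, ∀ x ∈ K, m ≤ ‖f x‖ := by
  rcases K.eq_empty_or_nonempty with rfl | hne
  · exact ⟨1, one_pos, by simp⟩
  obtain ⟨x, hx, hmin⟩ := hK.exists_isMinOn hne (continuous_norm.comp_continuousOn hf)
  exact ⟨‖f x‖, norm_pos_iff.2 (h x hx), fun y hy => hmin hy⟩

theorem IsCompact.exists_norm_le_lt_one {X E : Type*} [TopologicalSpace X]
    [NormedAddCommGroup E] {K : Set X} {f : X → E} (hK : IsCompact K) (hf : ContinuousOn f K)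
    (h : ∀ x ∈ K, ‖f x‖ < 1) : ∃ θ, 0 ≤ θ ∧ θ < 1 ∧ ∀ x ∈ K, ‖f x‖ ≤ θ := by
  rcases K.eq_empty_or_nonempty with rfl | hne
  · exact ⟨0, le_rfl, one_pos, by simp⟩
  obtain ⟨x, hx, hmax⟩ := hK.exists_isMaxOn hne (continuous_norm.comp_continuousOn hf)
  exact ⟨‖f x‖, norm_nonneg _, h x hx, fun y hy => hmax hy⟩

theorem dist_le_div_mul_dist_of_norm_le {E : Type*} [NormedAddCommGroup E] [NormedSpace ℂ E]
    {f : ℂ → E} {c z w : ℂ} {r M : ℝ} (hf : DifferentiableOn ℂ f (ball c (3 * r)))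
    (hM : ∀ y ∈ ball c (3 * r), ‖f y‖ ≤ M) (hz : z ∈ ball c r) (hw : w ∈ ball c r) :
    dist (f z) (f w) ≤ M / r * dist z w := by
  have hsub : ball w (2 * r) ⊆ ball c (3 * r) := by
    intro y hy
    rw [mem_ball] at hy hw ⊢
    linarith [dist_triangle y w c]
  have hmaps : MapsTo f (ball w (2 * r)) (closedBall (f w) (2 * M)) := fun y hy => by
    rw [mem_closedBall, dist_eq_norm]
    linarith [norm_sub_le (f y) (f w), hM y (hsub hy), hM w (hsub (mem_ball_self
      (by linarith [dist_nonneg (x := w) (y := c), mem_ball.1 hw])))]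
  have hzw : z ∈ ball w (2 * r) := by
    rw [mem_ball] at hz hw ⊢
    linarith [dist_triangle z c w, dist_comm w c]
  calc dist (f z) (f w) ≤ 2 * M / (2 * r) * dist z w :=
        Complex.dist_le_div_mul_dist_of_mapsTo_ball (hf.mono hsub) hmaps hzw
    _ = M / r * dist z w := by rw [mul_div_mul_left _ _ two_ne_zero]

theorem eventually_mul_pow_lt_mul_pow {a b μ l : ℝ} (ha : 0 < a) (hμ : 0 ≤ μ) (hμl : μ < l) :
    ∀ᶠ n : ℕ in atTop, b * μ ^ n < a * l ^ n := by
  have hl : 0 < l := hμ.trans_lt hμl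
  have hlim : Tendsto (fun n : ℕ => b * (μ / l) ^ n) atTop (𝓝 0) := by
    simpa using (tendsto_pow_atTop_nhds_zero_of_lt_one (div_nonneg hμ hl.le)
      ((div_lt_one hl).2 hμl)).const_mul b
  filter_upwards [hlim.eventually (gt_mem_nhds ha)] with n hn
  rwa [div_pow, mul_div_assoc', div_lt_iff₀ (pow_pos hl n)] at hn

theorem tendsto_of_norm_sub_le_mul_pow {E : Type*} [NormedAddCommGroup E] {x : ℕ → E} {a : E}
    {C θ : ℝ} (hθ0 : 0 ≤ θ) (hθ1 : θ < 1) (hx : ∀ᶠ k in atTop, ‖x k - a‖ ≤ C * θ ^ k) :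
    Tendsto x atTop (𝓝 a) := by
  rw [tendsto_iff_norm_sub_tendsto_zero]
  refine squeeze_zero' (Eventually.of_forall fun k => norm_nonneg _) hx ?_
  simpa using (tendsto_pow_atTop_nhds_zero_of_lt_one hθ0 hθ1).const_mul C

theorem tendsto_nat_mul_sub_of_differentiableAt {f : ℂ → ℂ} {x : ℕ → ℂ} {a : ℂ} {C θ : ℝ}
    (hf : DifferentiableAt ℂ f a) (hθ0 : 0 ≤ θ) (hθ1 : θ < 1)
    (hx : ∀ᶠ k in atTop, ‖x k - a‖ ≤ C * θ ^ k) :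
    Tendsto (fun k : ℕ => (k : ℂ) * (f (x k) - f a)) atTop (𝓝 0) := by
  have hO : (fun k => f (x k) - f a) =O[atTop] fun k => θ ^ k :=
    (hf.isBigO_sub.comp_tendsto (tendsto_of_norm_sub_le_mul_pow hθ0 hθ1 hx)).trans
      (Asymptotics.IsBigO.of_bound C (hx.mono fun k hk => by
        rwa [Real.norm_of_nonneg (by positivity)]))
  exact ((Asymptotics.isBigO_of_le (f := fun k : ℕ => (k : ℂ)) (g := fun k : ℕ => (k : ℝ)) _
    fun k => by simp).mul hO).trans_tendsto (tendsto_self_mul_const_pow_of_lt_one hθ0 hθ1)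

theorem RwrecC_binet {p : ℝ} {w α β : ℂ} (hsum : α + β = 1) (hprod : α * β = p * (1 - p) * w ^ 2)
    (n : ℕ) :
    (α - β) * RwrecC p w n = (α - (1 - p) * w) * α ^ n - (β - (1 - p) * w) * β ^ n := by
  have hrec : ∀ n, RwrecC p w (n + 2) = (α + β) * RwrecC p w (n + 1) - α * β * RwrecC p w n := by
    intro n; rw [hsum, hprod, one_mul]; rfl
  rw [sub_mul_eq_binet hrec]
  simp only [RwrecC]
  linear_combination (β ^ n - α ^ n) * hsum

theorem root_sub_mul_root_sub {p : ℝ} {w α β : ℂ} (hsum : α + β = 1)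
    (hprod : α * β = p * (1 - p) * w ^ 2) :
    (α - (1 - p) * w) * (β - (1 - p) * w) = (1 - p) * w * (w - 1) := by
  linear_combination hprod - (1 - p) * w * hsum

theorem sub_one_eq_of_RwrecC_eq_zero {p : ℝ} {w α β : ℂ} (hsum : α + β = 1)
    (hprod : α * β = p * (1 - p) * w ^ 2) (hα : α ≠ 0) (hqw : (1 - p) * w ≠ 0) {n : ℕ}
    (hR : RwrecC p w n = 0) :
    w - 1 = (β - (1 - p) * w) ^ 2 / ((1 - p) * w) * (β / α) ^ n := by
  -- multiply Binet's relation `(α - qw) αⁿ = (β - qw) βⁿ` by `β - qw`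
  have hb := RwrecC_binet hsum hprod n
  rw [hR, mul_zero] at hb
  rw [div_pow, div_mul_div_comm, eq_div_iff (mul_ne_zero hqw (pow_ne_zero n hα))]
  linear_combination -(β - (1 - p) * w) * hb - α ^ n * root_sub_mul_root_sub hsum hprod

theorem RwrecC_one (p : ℝ) (n : ℕ) : RwrecC p 1 n = (p : ℂ) ^ n := by
  induction n using Nat.twoStepInduction with
  | zero => rfl
  | one => simp [RwrecC]
  | more n ih₀ ih₁ => rw [RwrecC, ih₀, ih₁]; ring

theorem RwrecC_ofReal_im (p x : ℝ) (n : ℕ) : (RwrecC p x n).im = 0 := by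
  induction n using Nat.twoStepInduction with
  | zero => rfl
  | one => simp [RwrecC]
  | more n ih₀ ih₁ => simp [RwrecC, ih₀, ih₁, ← Complex.ofReal_pow]

theorem continuous_RwrecC (p : ℝ) (n : ℕ) : Continuous fun z => RwrecC p z n := by
  induction n using Nat.twoStepInduction with
  | zero => exact continuous_const
  | one => simp only [RwrecC]; fun_prop
  | more n ih₀ ih₁ => simp only [RwrecC]; fun_prop

namespace WeakReflectedWalk

noncomputable section

def discr (p : ℝ) (w : ℂ) : ℂ := 1 - 4 * p * (1 - p) * w ^ 2

/-- On this set the principal square root `sqrtDiscr` is holomorphic with positive real part, which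
separates the characteristic roots: `‖rootMinus p w‖ < ‖rootPlus p w‖`. -/
def rootDomain (p : ℝ) : Set ℂ := {w | 0 < (discr p w).re}

def sqrtDiscr (p : ℝ) (w : ℂ) : ℂ := discr p w ^ (2⁻¹ : ℂ)

def rootPlus (p : ℝ) (w : ℂ) : ℂ := (1 + sqrtDiscr p w) / 2

def rootMinus (p : ℝ) (w : ℂ) : ℂ := (1 - sqrtDiscr p w) / 2

def rootRatio (p : ℝ) (w : ℂ) : ℂ := rootMinus p w / rootPlus p w

/-- Near `1` the zeros of `RwrecC p · n` are the fixed points of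
`w ↦ 1 + zeroShift p w * rootRatio p w ^ n`. -/
def zeroShift (p : ℝ) (w : ℂ) : ℂ := (rootMinus p w - (1 - p) * w) ^ 2 / ((1 - p) * w)

end

variable {p : ℝ} {w : ℂ}

theorem isOpen_rootDomain (p : ℝ) : IsOpen (rootDomain p) :=
  isOpen_lt continuous_const (by unfold discr; fun_prop)

theorem closedBall_subset_rootDomain (hp : 0 ≤ p * (1 - p)) {R : ℝ}
    (hR : 4 * p * (1 - p) * R ^ 2 < 1) : closedBall 0 R ⊆ rootDomain p := by
  intro w hw
  rw [mem_closedBall_zero_iff] at hw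
  have hre : (w ^ 2).re ≤ R ^ 2 :=
    (Complex.re_le_norm _).trans (by rw [norm_pow]; gcongr)
  have hdiscr : (discr p w).re = 1 - 4 * (p * (1 - p)) * (w ^ 2).re := by
    rw [show discr p w = 1 - ((4 * (p * (1 - p)) : ℝ) : ℂ) * w ^ 2 by push_cast [discr]; ring,
      Complex.sub_re, Complex.one_re, Complex.re_ofReal_mul]
  show 0 < (discr p w).re
  nlinarith

theorem re_sqrtDiscr_pos (hw : w ∈ rootDomain p) : 0 < (sqrtDiscr p w).re := by
  have hw : 0 < (discr p w).re := hw
  rw [sqrtDiscr, Complex.cpow_inv_two_re]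
  exact Real.sqrt_pos.2 (by linarith [Complex.re_le_norm (discr p w)])

theorem sqrtDiscr_sq (p : ℝ) (w : ℂ) : sqrtDiscr p w ^ 2 = discr p w :=
  Complex.cpow_ofNat_inv_pow _ 2

theorem rootPlus_add_rootMinus (p : ℝ) (w : ℂ) : rootPlus p w + rootMinus p w = 1 := by
  unfold rootPlus rootMinus; ring

theorem rootPlus_mul_rootMinus (p : ℝ) (w : ℂ) :
    rootPlus p w * rootMinus p w = p * (1 - p) * w ^ 2 := by
  have h := sqrtDiscr_sq p w
  unfold discr at h
  unfold rootPlus rootMinus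
  linear_combination (-1 / 4 : ℂ) * h

theorem rootPlus_ne_zero (hw : w ∈ rootDomain p) : rootPlus p w ≠ 0 := by
  intro h
  have := congrArg Complex.re h
  simp only [rootPlus, Complex.div_ofNat_re, Complex.add_re, Complex.one_re,
    Complex.zero_re] at this
  linarith [re_sqrtDiscr_pos hw]

theorem norm_rootRatio_lt_one (hw : w ∈ rootDomain p) : ‖rootRatio p w‖ < 1 := by
  rw [rootRatio, norm_div, div_lt_one (norm_pos_iff.2 (rootPlus_ne_zero hw)),
    ← sq_lt_sq₀ (norm_nonneg _) (norm_nonneg _), Complex.sq_norm, Complex.sq_norm,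
    Complex.normSq_apply, Complex.normSq_apply]
  simp only [rootPlus, rootMinus, Complex.div_ofNat_re, Complex.div_ofNat_im, Complex.add_re,
    Complex.sub_re, Complex.add_im, Complex.sub_im, Complex.one_re, Complex.one_im]
  nlinarith [re_sqrtDiscr_pos hw]

theorem differentiableOn_sqrtDiscr (p : ℝ) : DifferentiableOn ℂ (sqrtDiscr p) (rootDomain p) :=
  fun _ hw => (DifferentiableAt.cpow_const (by unfold discr; fun_prop)
    (Complex.mem_slitPlane_iff.2 (Or.inl hw))).differentiableWithinAt

theorem differentiableOn_rootPlus (p : ℝ) : DifferentiableOn ℂ (rootPlus p) (rootDomain p) :=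
  ((differentiableOn_const 1).add (differentiableOn_sqrtDiscr p)).div_const 2

theorem differentiableOn_rootMinus (p : ℝ) : DifferentiableOn ℂ (rootMinus p) (rootDomain p) :=
  ((differentiableOn_const 1).sub (differentiableOn_sqrtDiscr p)).div_const 2

theorem differentiableOn_rootRatio (p : ℝ) : DifferentiableOn ℂ (rootRatio p) (rootDomain p) :=
  (differentiableOn_rootMinus p).div (differentiableOn_rootPlus p) fun _ hw => rootPlus_ne_zero hw

theorem differentiableOn_zeroShift (hp : p ≠ 1) :
    DifferentiableOn ℂ (zeroShift p) (rootDomain p \ {0}) := by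
  have hq : (1 - p : ℂ) ≠ 0 := sub_ne_zero.2 (by exact_mod_cast hp.symm)
  have hm := (differentiableOn_rootMinus p).mono (sdiff_subset (t := {0}))
  exact ((hm.sub (by fun_prop)).pow 2).div (by fun_prop) fun w hw => mul_ne_zero hq hw.2

theorem sqrtDiscr_zero (p : ℝ) : sqrtDiscr p 0 = 1 := by simp [sqrtDiscr, discr]

theorem sqrtDiscr_one (hp : p ≤ 1 / 2) : sqrtDiscr p 1 = 1 - 2 * p := by
  have h : discr p 1 = (((1 - 2 * p) ^ 2 : ℝ) : ℂ) := by push_cast [discr]; ring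
  rw [sqrtDiscr, h, show (2⁻¹ : ℂ) = ((2⁻¹ : ℝ) : ℂ) by push_cast; rfl,
    ← Complex.ofReal_cpow (sq_nonneg _), ← one_div, ← Real.sqrt_eq_rpow,
    Real.sqrt_sq (by linarith)]
  push_cast; ring

theorem rootPlus_one (hp : p ≤ 1 / 2) : rootPlus p 1 = 1 - p := by
  rw [rootPlus, sqrtDiscr_one hp]; ring

theorem rootMinus_one (hp : p ≤ 1 / 2) : rootMinus p 1 = p := by
  rw [rootMinus, sqrtDiscr_one hp]; ring

theorem rootPlus_sub_ne_zero (hp : p ≠ 1) (hw : w ∈ rootDomain p) (hw1 : w ≠ 1) :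
    rootPlus p w - (1 - p) * w ≠ 0 := by
  intro h
  have hprod := root_sub_mul_root_sub (rootPlus_add_rootMinus p w) (rootPlus_mul_rootMinus p w)
  rw [h, zero_mul, eq_comm] at hprod
  have hq : (1 - p : ℂ) ≠ 0 := sub_ne_zero.2 (by exact_mod_cast hp.symm)
  rcases mul_eq_zero.1 hprod with h0 | h1
  · rcases mul_eq_zero.1 h0 with hq0 | rfl
    · exact hq hq0
    · simp [rootPlus, sqrtDiscr_zero] at h
  · exact hw1 (sub_eq_zero.1 h1)

theorem rootPlus_sub_mul_pow_eq {n : ℕ} (hR : RwrecC p w n = 0) :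
    (rootPlus p w - (1 - p) * w) * rootPlus p w ^ n =
      (rootMinus p w - (1 - p) * w) * rootMinus p w ^ n := by
  have h := RwrecC_binet (rootPlus_add_rootMinus p w) (rootPlus_mul_rootMinus p w) n
  rwa [hR, mul_zero, eq_comm, sub_eq_zero] at h

theorem sub_one_eq_zeroShift_mul (hp : p ≠ 1) (hw : w ∈ rootDomain p) (hw0 : w ≠ 0) {n : ℕ}
    (hR : RwrecC p w n = 0) : w - 1 = zeroShift p w * rootRatio p w ^ n :=
  sub_one_eq_of_RwrecC_eq_zero (rootPlus_add_rootMinus p w) (rootPlus_mul_rootMinus p w)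
    (rootPlus_ne_zero hw) (mul_ne_zero (sub_ne_zero.2 (by exact_mod_cast hp.symm)) hw0) hR

theorem eventually_RwrecC_ne_zero (hp : p ≠ 1) {K : Set ℂ} (hK : IsCompact K)
    (hKD : K ⊆ rootDomain p) (hK1 : (1 : ℂ) ∉ K) :
    ∀ᶠ n in atTop, ∀ w ∈ K, RwrecC p w n ≠ 0 := by
  obtain ⟨m, hm, hmK⟩ := hK.exists_pos_le_norm (f := fun w => rootPlus p w - (1 - p) * w)
    (((differentiableOn_rootPlus p).sub (by fun_prop)).continuousOn.mono hKD)
    fun w hw => rootPlus_sub_ne_zero hp (hKD hw) (ne_of_mem_of_not_mem hw hK1)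
  obtain ⟨M, hM⟩ := hK.exists_bound_of_continuousOn (f := fun w => rootMinus p w - (1 - p) * w)
    (((differentiableOn_rootMinus p).sub (by fun_prop)).continuousOn.mono hKD)
  obtain ⟨θ, hθ0, hθ1, hθ⟩ := hK.exists_norm_le_lt_one
    ((differentiableOn_rootRatio p).continuousOn.mono hKD)
    fun w hw => norm_rootRatio_lt_one (hKD hw)
  filter_upwards [eventually_mul_pow_lt_mul_pow (b := M) hm hθ0 hθ1] with n hn w hw hR
  have hα := rootPlus_ne_zero (hKD hw)
  have heq : rootPlus p w - (1 - p) * w = (rootMinus p w - (1 - p) * w) * rootRatio p w ^ n := by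
    rw [rootRatio, div_pow, mul_div_assoc', eq_div_iff (pow_ne_zero n hα)]
    exact rootPlus_sub_mul_pow_eq hR
  have hle : ‖rootPlus p w - (1 - p) * w‖ ≤ M * θ ^ n := by
    rw [heq, norm_mul, norm_pow]
    exact mul_le_mul (hM w hw) (pow_le_pow_left₀ (norm_nonneg _) (hθ w hw) n) (by positivity)
      ((norm_nonneg _).trans (hM w hw))
  rw [one_pow, mul_one] at hn
  linarith [hmK w hw]

theorem exists_norm_zeroShift_mul_rootRatio_pow_le (hp : p ≠ 1) {K : Set ℂ} (hK : IsCompact K)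
    (hKD : K ⊆ rootDomain p) (hK0 : (0 : ℂ) ∉ K) :
    ∃ C θ : ℝ, 0 ≤ θ ∧ θ < 1 ∧
      ∀ n : ℕ, ∀ w ∈ K, ‖zeroShift p w * rootRatio p w ^ n‖ ≤ C * θ ^ n := by
  have hKD' : K ⊆ rootDomain p \ {0} := fun w hw => ⟨hKD hw, ne_of_mem_of_not_mem hw hK0⟩
  obtain ⟨C, hC⟩ := hK.exists_bound_of_continuousOn
    ((differentiableOn_zeroShift hp).continuousOn.mono hKD')
  obtain ⟨θ, hθ0, hθ1, hθ⟩ := hK.exists_norm_le_lt_one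
    ((differentiableOn_rootRatio p).continuousOn.mono hKD)
    fun w hw => norm_rootRatio_lt_one (hKD hw)
  refine ⟨C, θ, hθ0, hθ1, fun n w hw => ?_⟩
  rw [norm_mul, norm_pow]
  exact mul_le_mul (hC w hw) (pow_le_pow_left₀ (norm_nonneg _) (hθ w hw) n) (by positivity)
    ((norm_nonneg _).trans (hC w hw))

theorem eventually_eq_of_RwrecC_eq_zero (hp : p ≠ 1) {δ : ℝ} (hδ : 0 < δ)
    (hD : closedBall (1 : ℂ) (3 * δ) ⊆ rootDomain p) (h0 : (0 : ℂ) ∉ closedBall (1 : ℂ) (3 * δ)) :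
    ∀ᶠ n in atTop, ∀ z ∈ ball (1 : ℂ) δ, ∀ w ∈ ball (1 : ℂ) δ,
      RwrecC p z n = 0 → RwrecC p w n = 0 → z = w := by
  obtain ⟨C, θ, hθ0, hθ1, hG⟩ :=
    exists_norm_zeroShift_mul_rootRatio_pow_le hp (isCompact_closedBall _ _) hD h0
  have hball : ball (1 : ℂ) (3 * δ) ⊆ rootDomain p \ {0} := fun y hy =>
    ⟨hD (ball_subset_closedBall hy), ne_of_mem_of_not_mem (ball_subset_closedBall hy) h0⟩
  filter_upwards [eventually_mul_pow_lt_mul_pow (b := C) hδ hθ0 hθ1] with n hn z hz w hw hRz hRw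
  rw [one_pow, mul_one] at hn
  have hfix : ∀ y ∈ ball (1 : ℂ) δ, RwrecC p y n = 0 → y - 1 = zeroShift p y * rootRatio p y ^ n :=
    fun y hy hR => have hy' := hball (ball_subset_ball (by linarith) hy)
      sub_one_eq_zeroShift_mul hp hy'.1 hy'.2 hR
  have hlip := dist_le_div_mul_dist_of_norm_le (f := fun y => zeroShift p y * rootRatio p y ^ n)
    (((differentiableOn_zeroShift hp).mul ((differentiableOn_rootRatio p).mono
      sdiff_subset |>.pow n)).mono hball)
    (fun y hy => hG n y (ball_subset_closedBall hy)) hz hw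
  rw [dist_eq_norm, dist_eq_norm, ← hfix z hz hRz, ← hfix w hw hRw, sub_sub_sub_cancel_right,
    ← dist_eq_norm] at hlip
  have hc : C * θ ^ n / δ < 1 := (div_lt_one hδ).2 hn
  exact dist_le_zero.1 (by nlinarith [dist_nonneg (x := z) (y := w)])

theorem eventually_re_RwrecC_neg (hp0 : 0 < p) (hp : p < 1 / 2) {x : ℝ} (hx1 : 1 < x)
    (hx : 4 * p * (1 - p) * x ^ 2 < 1) : ∀ᶠ n in atTop, (RwrecC p x n).re < 0 := by
  have hpq : 0 < p * (1 - p) * x ^ 2 := mul_pos (mul_pos hp0 (by linarith)) (by positivity)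
  obtain ⟨σ, hσ0, hσ1, hσ⟩ : ∃ σ : ℝ, 0 < σ ∧ σ ≤ 1 ∧ σ ^ 2 = 1 - 4 * p * (1 - p) * x ^ 2 :=
    ⟨_, Real.sqrt_pos.2 (by linarith), Real.sqrt_le_one.2 (by linarith), Real.sq_sqrt (by linarith)⟩
  -- the real characteristic roots `l > μ ≥ 0`; both Binet coefficients turn out negative
  obtain ⟨l, μ, hsum, hdiff, hprod⟩ : ∃ l μ : ℝ, l + μ = 1 ∧ l - μ = σ ∧
      l * μ = p * (1 - p) * x ^ 2 :=
    ⟨(1 + σ) / 2, (1 - σ) / 2, by ring, by ring, by linear_combination (-1 / 4 : ℝ) * hσ⟩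
  have hb : μ - (1 - p) * x < 0 := by nlinarith
  have ha : l - (1 - p) * x < 0 := by
    have hcoeff : (l - (1 - p) * x) * (μ - (1 - p) * x) = (1 - p) * x * (x - 1) := by
      linear_combination hprod - (1 - p) * x * hsum
    have : 0 < (1 - p) * x * (x - 1) := mul_pos (mul_pos (by linarith) (by linarith)) (by linarith)
    by_contra h
    nlinarith [mul_nonpos_of_nonneg_of_nonpos (not_lt.1 h) hb.le]
  filter_upwards [eventually_mul_pow_lt_mul_pow (a := (1 - p) * x - l) (b := (1 - p) * x - μ)
    (μ := μ) (l := l) (by linarith) (by linarith) (by linarith)] with n hn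
  have hbinet := RwrecC_binet (p := p) (w := x) (α := l) (β := μ) (by exact_mod_cast hsum)
    (by exact_mod_cast hprod) n
  rw [show RwrecC p x n = ((RwrecC p x n).re : ℂ) from
    Complex.ext rfl (by simp [RwrecC_ofReal_im])] at hbinet
  have hre : (l - μ) * (RwrecC p x n).re =
      (l - (1 - p) * x) * l ^ n - (μ - (1 - p) * x) * μ ^ n := by exact_mod_cast hbinet
  by_contra h
  nlinarith [mul_nonneg hσ0.le (not_lt.1 h)]

theorem eventually_exists_real_zero (hp0 : 0 < p) (hp : p < 1 / 2) {x₀ : ℝ} (h1 : 1 < x₀)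
    (hx₀ : 4 * p * (1 - p) * x₀ ^ 2 < 1) :
    ∀ᶠ n in atTop, ∃ x ∈ Ioo 1 x₀, RwrecC p x n = 0 := by
  filter_upwards [eventually_re_RwrecC_neg hp0 hp h1 hx₀] with n hn
  have hcont : Continuous fun x : ℝ => (RwrecC p x n).re :=
    Complex.continuous_re.comp ((continuous_RwrecC p n).comp Complex.continuous_ofReal)
  have hpos : 0 < (RwrecC p ((1 : ℝ) : ℂ) n).re := by
    rw [Complex.ofReal_one, RwrecC_one, ← Complex.ofReal_pow, Complex.ofReal_re]
    positivity
  obtain ⟨x, hx, hx0⟩ := intermediate_value_Ioo' h1.le hcont.continuousOn ⟨hn, hpos⟩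
  exact ⟨x, hx, Complex.ext hx0 (RwrecC_ofReal_im p x n)⟩

theorem exists_radius (hp0 : 0 < p) (hp : p < 1 / 2) :
    ∃ δ > 0, 3 * δ < 1 ∧ 4 * p * (1 - p) * (1 + 4 * δ) ^ 2 < 1 := by
  have hε : 0 < (1 - 2 * p) ^ 2 := by nlinarith
  refine ⟨(1 - 2 * p) ^ 2 / 8, by positivity, by nlinarith, ?_⟩
  nlinarith [pow_pos hε 2]

theorem eventually_exists_minimal_real_zero (hp0 : 0 < p) (hp : p < 1 / 2) :
    ∃ C θ : ℝ, 0 ≤ θ ∧ θ < 1 ∧ ∀ᶠ n in atTop, ∃ x : ℝ, 1 < x ∧ RwrecC p x n = 0 ∧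
      (∀ w : ℂ, RwrecC p w n = 0 → x ≤ ‖w‖) ∧ ‖(x : ℂ) - 1‖ ≤ C * θ ^ n := by
  have hp1 : p ≠ 1 := by linarith
  obtain ⟨δ, hδ, hδ1, hR⟩ := exists_radius hp0 hp
  have hRD := closedBall_subset_rootDomain (by nlinarith) hR
  have hnear : closedBall (1 : ℂ) (3 * δ) ⊆ closedBall 0 (1 + 4 * δ) :=
    closedBall_subset_closedBall' (by norm_num; linarith)
  have hnear0 : (0 : ℂ) ∉ closedBall (1 : ℂ) (3 * δ) := by
    simp only [mem_closedBall, dist_zero_left, norm_one]; linarith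
  obtain ⟨C, θ, hθ0, hθ1, hG⟩ := exists_norm_zeroShift_mul_rootRatio_pow_le hp1
    (isCompact_closedBall _ _) (hnear.trans hRD) hnear0
  refine ⟨C, θ, hθ0, hθ1, ?_⟩
  have hx₀ : 4 * p * (1 - p) * (1 + δ / 2) ^ 2 < 1 := lt_of_le_of_lt (mul_le_mul_of_nonneg_left
    (pow_le_pow_left₀ (by positivity) (by linarith) 2) (by nlinarith)) hR
  filter_upwards [eventually_exists_real_zero hp0 hp (by linarith) hx₀,
    eventually_RwrecC_ne_zero hp1 ((isCompact_closedBall 0 _).diff isOpen_ball)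
      (sdiff_subset.trans hRD) (fun h => h.2 (mem_ball_self hδ)),
    eventually_eq_of_RwrecC_eq_zero hp1 hδ (hnear.trans hRD) hnear0]
    with n ⟨x, ⟨hx1, hxδ⟩, hxR⟩ hfar hunique
  have hxball : (x : ℂ) ∈ ball (1 : ℂ) δ := by
    rw [mem_ball, dist_eq_norm, ← Complex.ofReal_one, ← Complex.ofReal_sub, Complex.norm_real,
      Real.norm_of_nonneg (by linarith)]
    linarith
  refine ⟨x, hx1, hxR, fun w hw => ?_, ?_⟩
  · by_cases hw1 : w ∈ ball (1 : ℂ) δ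
    · rw [hunique w hw1 x hxball hw hxR, Complex.norm_real, Real.norm_of_nonneg (by linarith)]
    by_cases hwR : ‖w‖ ≤ 1 + 4 * δ
    · exact absurd hw (hfar w ⟨mem_closedBall_zero_iff.2 hwR, hw1⟩)
    · linarith
  · have hxK : (x : ℂ) ∈ closedBall 1 (3 * δ) :=
      ball_subset_closedBall (ball_subset_ball (by linarith) hxball)
    rw [sub_one_eq_zeroShift_mul hp1 (hRD (hnear hxK)) (ne_of_mem_of_not_mem hxK hnear0) hxR]
    exact hG n x hxK

theorem tendsto_sub_one_mul_pow (hp0 : 0 < p) (hp : p < 1 / 2) {x : ℕ → ℂ} {C θ : ℝ}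
    (hθ0 : 0 ≤ θ) (hθ1 : θ < 1)
    (hx : ∀ᶠ k in atTop, RwrecC p (x k) (k + 1) = 0 ∧ ‖x k - 1‖ ≤ C * θ ^ k) :
    Tendsto (fun k => (x k - 1) * ((1 - p) / p) ^ k) atTop
      (𝓝 (p * (1 - 2 * p) ^ 2 / (1 - p) ^ 2)) := by
  have hp1 : p ≠ 1 := by linarith
  have hq : (1 - p : ℂ) ≠ 0 := sub_ne_zero.2 (by exact_mod_cast hp1.symm)
  have hp' : (p : ℂ) ≠ 0 := by exact_mod_cast hp0.ne'
  have hU : IsOpen (rootDomain p \ {0}) := (isOpen_rootDomain p).sdiff isClosed_singleton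
  have h1U : (1 : ℂ) ∈ rootDomain p \ {0} :=
    ⟨closedBall_subset_rootDomain (R := 1) (by nlinarith) (by nlinarith) (by simp), one_ne_zero⟩
  have hrate := hx.mono fun k hk => hk.2
  have hx1 := tendsto_of_norm_sub_le_mul_pow hθ0 hθ1 hrate
  have hratio1 : rootRatio p 1 = p / (1 - p) := by
    rw [rootRatio, rootPlus_one hp.le, rootMinus_one hp.le]
  -- `(x k - 1) (q/p)^k = zeroShift (x k) * rootRatio (x k) * (1 + g k)^k` with `k * g k → 0`
  set g : ℕ → ℂ := fun k => (1 - p) / p * (rootRatio p (x k) - rootRatio p 1)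
  have hg : Tendsto (fun k : ℕ => (k : ℂ) * g k) atTop (𝓝 0) := by
    simpa [g, mul_left_comm] using (tendsto_nat_mul_sub_of_differentiableAt
      ((differentiableOn_rootRatio p).differentiableAt ((isOpen_rootDomain p).mem_nhds h1U.1))
      hθ0 hθ1 hrate).const_mul ((1 - p) / p : ℂ)
  have hpow : Tendsto (fun k => (1 + g k) ^ k) atTop (𝓝 1) := by
    simpa using Complex.tendsto_one_add_pow_exp_of_tendsto hg
  have hcoef : Tendsto (fun k => zeroShift p (x k) * rootRatio p (x k)) atTop
      (𝓝 (zeroShift p 1 * rootRatio p 1)) :=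
    (DifferentiableOn.differentiableAt ((differentiableOn_zeroShift hp1).mul
      ((differentiableOn_rootRatio p).mono sdiff_subset))
      (hU.mem_nhds h1U)).continuousAt.tendsto.comp hx1
  have hlim : zeroShift p 1 * rootRatio p 1 * 1 = p * (1 - 2 * p) ^ 2 / (1 - p) ^ 2 := by
    rw [zeroShift, rootMinus_one hp.le, hratio1]
    field_simp
    ring
  rw [← hlim]
  refine (hcoef.mul hpow).congr' ?_
  filter_upwards [hx, hx1.eventually (hU.mem_nhds h1U)] with k hk hxU
  have hg1 : 1 + g k = (1 - p) / p * rootRatio p (x k) := by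
    simp only [g]
    rw [hratio1]
    field_simp
    ring
  rw [sub_one_eq_zeroShift_mul hp1 hxU.1 hxU.2 hk.1, hg1, mul_pow, pow_succ]
  ring

end WeakReflectedWalk

/-- For all sufficiently large `k`, `R_k` has a zero `z_k` that is real, positive,
greater than `1`, and of smallest modulus among all complex zeros of `R_k`, and
`(z_k - 1)(q/p)^k → p(1-2p)²/q²` as `k → ∞`. -/
theorem weak_dominant_zero (p q : ℝ) (hp0 : 0 < p) (hp : p < 1 / 2) (hq : q = 1 - p) :
    ∃ K : ℕ, ∃ zk : ℕ → ℝ,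
      (∀ k : ℕ, K ≤ k →
        0 < zk k ∧ 1 < zk k ∧ RwrecC p ((zk k : ℂ)) (k + 1) = 0 ∧
          ∀ w : ℂ, RwrecC p w (k + 1) = 0 → zk k ≤ ‖w‖) ∧
      Tendsto (fun k : ℕ => (zk k - 1) * (q / p) ^ k) atTop
        (nhds (p * (1 - 2 * p) ^ 2 / q ^ 2)) := by
  subst hq
  obtain ⟨C, θ, hθ0, hθ1, hzero⟩ := WeakReflectedWalk.eventually_exists_minimal_real_zero hp0 hp
  obtain ⟨zk, hzk⟩ := ((tendsto_add_atTop_nat 1).eventually hzero).choice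
  obtain ⟨K, hK⟩ := eventually_atTop.1 hzk
  refine ⟨K, zk, fun k hk => ?_, ?_⟩
  · obtain ⟨h1, hR, hmin, -⟩ := hK k hk
    exact ⟨by linarith, h1, hR, hmin⟩
  · rw [← tendsto_ofReal_iff]
    push_cast
    exact WeakReflectedWalk.tendsto_sub_one_mul_pow hp0 hp (C := C * θ) hθ0 hθ1
      (hzk.mono fun k hk => ⟨hk.2.1, hk.2.2.2.trans_eq (by ring)⟩)
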